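/- Let A₀, A₁, A₂, Ω satisfy the assumptions guaranteeing the unique solution x* of min{A₀x+q₀, A₁x+q₁, A₂x+q₂} = 0 via the condition σ_min(2ΩA₀+A₁+A₂) > 2‖A₁−A₂‖ + ‖2ΩA₀−A₁−A₂‖. Then for all x ∈ ℝⁿ, ‖x − x*‖ ≤ ‖ψ(x)‖ / (σ_min(2ΩA₀+A₁+A₂) − 2‖A₁−A₂‖ − ‖2ΩA₀−A₁−A₂‖), where ψ(x) = −(2ΩA₀+A₁+A₂)x − |(A₁−A₂)x+q₁−q₂| − |(2ΩA₀−A₁−A₂)x + |(A₁−A₂)x+q₁−q₂| + 2Ωq₀−q₁−q₂| − (2Ωq₀+q₁+q₂) sign-adjusted so that ψ(x*) = 0 (equivalently, the residual of the absolute value reformulation). -/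

import Mathlib

noncomputable def mApp {n : ℕ} (B : Matrix (Fin n) (Fin n) ℝ) (x : EuclideanSpace ℝ (Fin n)) :
    EuclideanSpace ℝ (Fin n) := Matrix.toEuclideanCLM (𝕜 := ℝ) B x

noncomputable def specNorm {n : ℕ} (B : Matrix (Fin n) (Fin n) ℝ) : ℝ :=
  ‖Matrix.toEuclideanCLM (𝕜 := ℝ) B‖

noncomputable def sigmaMin {n : ℕ} (B : Matrix (Fin n) (Fin n) ℝ) : ℝ :=
  sInf {r : ℝ | ∃ v : EuclideanSpace ℝ (Fin n), ‖v‖ = 1 ∧ r = ‖mApp B v‖}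

def vabs {n : ℕ} (v : EuclideanSpace ℝ (Fin n)) : EuclideanSpace ℝ (Fin n) := WithLp.toLp 2 (fun i => |v i|)

/-!
Write `M = 2ΩA₀ + A₁ + A₂`. Applying `s + t - |s - t| = 2 min s t` twice, the `i`-th component
of `ψ x*` becomes `2 min (2 Ωᵢᵢ (A₀x* + q₀)ᵢ) (2 min (A₁x* + q₁)ᵢ (A₂x* + q₂)ᵢ)`, which vanishes
since `Ωᵢᵢ ≥ 0` and `x*` solves the complementarity problem. As `|·|` is componentwise
1-Lipschitz, `x ↦ M x - ψ x` is Lipschitz with constant `2‖A₁ - A₂‖ + ‖2ΩA₀ - A₁ - A₂‖`, hence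
`σ_min(M) ‖x - x*‖ ≤ ‖M (x - x*)‖ ≤ ‖ψ x - ψ x*‖ + (2‖A₁ - A₂‖ + ‖2ΩA₀ - A₁ - A₂‖) ‖x - x*‖`.
-/

section Matrix

variable {n : ℕ}

lemma mApp_add (B C : Matrix (Fin n) (Fin n) ℝ) (x : EuclideanSpace ℝ (Fin n)) :
    mApp (B + C) x = mApp B x + mApp C x := by
  simp [mApp]

lemma mApp_sub (B C : Matrix (Fin n) (Fin n) ℝ) (x : EuclideanSpace ℝ (Fin n)) :
    mApp (B - C) x = mApp B x - mApp C x := by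
  simp [mApp]

lemma mApp_smul (r : ℝ) (B : Matrix (Fin n) (Fin n) ℝ) (x : EuclideanSpace ℝ (Fin n)) :
    mApp (r • B) x = r • mApp B x := by
  simp [mApp]

lemma mApp_mul (B C : Matrix (Fin n) (Fin n) ℝ) (x : EuclideanSpace ℝ (Fin n)) :
    mApp (B * C) x = mApp B (mApp C x) := by
  simp [mApp]

lemma mApp_map_sub (B : Matrix (Fin n) (Fin n) ℝ) (x y : EuclideanSpace ℝ (Fin n)) :
    mApp B (x - y) = mApp B x - mApp B y := by
  simp [mApp]

lemma mApp_apply_of_isDiag {D : Matrix (Fin n) (Fin n) ℝ} (hD : D.IsDiag)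
    (x : EuclideanSpace ℝ (Fin n)) (i : Fin n) : mApp D x i = D i i * x i := by
  conv_lhs => rw [← hD.diagonal_diag]
  simp [mApp, Matrix.mulVec_diagonal]

lemma norm_mApp_le (B : Matrix (Fin n) (Fin n) ℝ) (x : EuclideanSpace ℝ (Fin n)) :
    ‖mApp B x‖ ≤ specNorm B * ‖x‖ :=
  (Matrix.toEuclideanCLM (𝕜 := ℝ) B).le_opNorm x

lemma sigmaMin_mul_norm_le (B : Matrix (Fin n) (Fin n) ℝ) (x : EuclideanSpace ℝ (Fin n)) :
    sigmaMin B * ‖x‖ ≤ ‖mApp B x‖ := by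
  rcases eq_or_ne x 0 with rfl | hx
  · simp [mApp]
  have hx : 0 < ‖x‖ := norm_pos_iff.mpr hx
  have hmem : ‖mApp B x‖ / ‖x‖ ∈
      {r : ℝ | ∃ v : EuclideanSpace ℝ (Fin n), ‖v‖ = 1 ∧ r = ‖mApp B v‖} :=
    ⟨‖x‖⁻¹ • x, by simp [norm_smul, hx.ne'],
      by simp [mApp, norm_smul, div_eq_inv_mul]⟩
  have hbdd : BddBelow {r : ℝ | ∃ v : EuclideanSpace ℝ (Fin n), ‖v‖ = 1 ∧ r = ‖mApp B v‖} :=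
    ⟨0, by rintro r ⟨v, -, rfl⟩; exact norm_nonneg _⟩
  exact (le_div_iff₀ hx).mp (csInf_le hbdd hmem)

lemma norm_vabs_sub_vabs_le (u v : EuclideanSpace ℝ (Fin n)) :
    ‖vabs u - vabs v‖ ≤ ‖u - v‖ := by
  simp only [EuclideanSpace.norm_eq, vabs, PiLp.sub_apply, Real.norm_eq_abs]
  gcongr √(∑ i, ?_) with i
  exact pow_le_pow_left₀ (abs_nonneg _) (abs_abs_sub_abs_le_abs_sub _ _) 2

end Matrix

lemma add_sub_abs_sub_eq_two_mul_min (s t : ℝ) : s + t - |s - t| = 2 * min s t := by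
  rcases le_total s t with h | h
  · rw [abs_of_nonpos (sub_nonpos.mpr h), min_eq_left h]; ring
  · rw [abs_of_nonneg (sub_nonneg.mpr h), min_eq_right h]; ring

lemma residual_eq_zero_of_min_eq_zero {ω a b c : ℝ} (hω : 0 ≤ ω) (h : min a (min b c) = 0) :
    2 * ω * a + b + c - |b - c| - |(2 * ω * a - b - c + |b - c|)| = 0 := by
  have hbc := add_sub_abs_sub_eq_two_mul_min b c
  have hmin : min (2 * ω * a) (2 * min b c) = 0 := by
    have ha : 0 ≤ a := h ▸ min_le_left _ _
    have hm : 0 ≤ min b c := h ▸ min_le_right _ _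
    rcases min_eq_iff.mp h with ⟨h0, -⟩ | ⟨h0, -⟩ <;> rw [h0]
    · simpa using hm
    · simpa using mul_nonneg (mul_nonneg zero_le_two hω) ha
  have hsum := add_sub_abs_sub_eq_two_mul_min (2 * ω * a) (2 * min b c)
  rw [show 2 * ω * a - b - c + |b - c| = 2 * ω * a - 2 * min b c by linarith]
  linarith

section Residual

variable {n : ℕ}

noncomputable def gaveResidual (M B C : Matrix (Fin n) (Fin n) ℝ) (b c d : EuclideanSpace ℝ (Fin n))
    (x : EuclideanSpace ℝ (Fin n)) : EuclideanSpace ℝ (Fin n) :=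
  mApp M x - vabs (mApp B x + b) - vabs (mApp C x + vabs (mApp B x + b) + c) + d

lemma sub_mul_norm_sub_le_norm_gaveResidual_sub (M B C : Matrix (Fin n) (Fin n) ℝ)
    (b c d x y : EuclideanSpace ℝ (Fin n)) :
    (sigmaMin M - 2 * specNorm B - specNorm C) * ‖x - y‖ ≤
      ‖gaveResidual M B C b c d x - gaveResidual M B C b c d y‖ := by
  set P := fun z => vabs (mApp B z + b)
  set Q := fun z => vabs (mApp C z + P z + c)
  have hP : ‖P x - P y‖ ≤ specNorm B * ‖x - y‖ := calc
    ‖P x - P y‖ ≤ ‖mApp B x + b - (mApp B y + b)‖ := norm_vabs_sub_vabs_le _ _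
    _ = ‖mApp B (x - y)‖ := by rw [mApp_map_sub, add_sub_add_right_eq_sub]
    _ ≤ specNorm B * ‖x - y‖ := norm_mApp_le B _
  have hQ : ‖Q x - Q y‖ ≤ specNorm C * ‖x - y‖ + specNorm B * ‖x - y‖ := calc
    ‖Q x - Q y‖ ≤ ‖mApp C x + P x + c - (mApp C y + P y + c)‖ := norm_vabs_sub_vabs_le _ _
    _ = ‖mApp C (x - y) + (P x - P y)‖ := by rw [mApp_map_sub]; abel_nf
    _ ≤ specNorm C * ‖x - y‖ + specNorm B * ‖x - y‖ :=
      (norm_add_le _ _).trans (add_le_add (norm_mApp_le C _) hP)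
  have hM : mApp M (x - y) =
      (gaveResidual M B C b c d x - gaveResidual M B C b c d y) + (P x - P y) + (Q x - Q y) := by
    simp only [gaveResidual, mApp_map_sub, P, Q]; abel
  have hσ := sigmaMin_mul_norm_le M (x - y)
  rw [hM] at hσ
  linarith [norm_add₃_le (a := gaveResidual M B C b c d x - gaveResidual M B C b c d y)
    (b := P x - P y) (c := Q x - Q y)]

end Residual

lemma gaveResidual_eq_zero_of_min_eq_zero {n : ℕ} {Ω A₀ A₁ A₂ : Matrix (Fin n) (Fin n) ℝ}
    (hdiag : Ω.IsDiag) (hnonneg : ∀ i, 0 ≤ Ω i i) {q₀ q₁ q₂ xs : EuclideanSpace ℝ (Fin n)}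
    (hxs : ∀ i, min ((mApp A₀ xs + q₀) i)
        (min ((mApp A₁ xs + q₁) i) ((mApp A₂ xs + q₂) i)) = 0) :
    gaveResidual ((2 : ℝ) • (Ω * A₀) + A₁ + A₂) (A₁ - A₂) ((2 : ℝ) • (Ω * A₀) - A₁ - A₂)
      (q₁ - q₂) ((2 : ℝ) • mApp Ω q₀ - q₁ - q₂) ((2 : ℝ) • mApp Ω q₀ + q₁ + q₂) xs = 0 := by
  ext i
  have key := residual_eq_zero_of_min_eq_zero (hnonneg i) (hxs i)
  simp only [gaveResidual, vabs, mApp_add, mApp_sub, mApp_smul, mApp_mul,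
    mApp_apply_of_isDiag hdiag, PiLp.add_apply, PiLp.sub_apply, PiLp.smul_apply, smul_eq_mul,
    PiLp.zero_apply] at key ⊢
  ring_nf at key ⊢
  linarith

theorem stmt_14 {n : ℕ} (Ω A₀ A₁ A₂ : Matrix (Fin n) (Fin n) ℝ)
    (hdiag : Ω.IsDiag) (hpos : ∀ i, 0 < Ω i i)
    (hσ : sigmaMin ((2 : ℝ) • (Ω * A₀) + A₁ + A₂) >
        2 * specNorm (A₁ - A₂) + specNorm ((2 : ℝ) • (Ω * A₀) - A₁ - A₂))
    (q₀ q₁ q₂ : EuclideanSpace ℝ (Fin n))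
    (ψ : EuclideanSpace ℝ (Fin n) → EuclideanSpace ℝ (Fin n))
    (hψ : ∀ x, ψ x = mApp ((2 : ℝ) • (Ω * A₀) + A₁ + A₂) x
          - vabs (mApp (A₁ - A₂) x + (q₁ - q₂))
          - vabs (mApp ((2 : ℝ) • (Ω * A₀) - A₁ - A₂) x
              + vabs (mApp (A₁ - A₂) x + (q₁ - q₂))
              + ((2 : ℝ) • mApp Ω q₀ - q₁ - q₂))
          + ((2 : ℝ) • mApp Ω q₀ + q₁ + q₂))
    (xs : EuclideanSpace ℝ (Fin n))
    (hxs : ∀ i, min ((mApp A₀ xs + q₀) i)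
        (min ((mApp A₁ xs + q₁) i) ((mApp A₂ xs + q₂) i)) = 0) :
    ∀ x : EuclideanSpace ℝ (Fin n),
      ‖x - xs‖ ≤ ‖ψ x‖ / (sigmaMin ((2 : ℝ) • (Ω * A₀) + A₁ + A₂)
          - 2 * specNorm (A₁ - A₂) - specNorm ((2 : ℝ) • (Ω * A₀) - A₁ - A₂)) := by
  obtain rfl : ψ = gaveResidual _ _ _ _ _ _ := funext hψ
  intro x
  have hψxs := gaveResidual_eq_zero_of_min_eq_zero hdiag (fun i => (hpos i).le) hxs
  rw [le_div_iff₀ (by linarith), mul_comm, ← sub_zero (gaveResidual _ _ _ _ _ _ x), ← hψxs]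
  exact sub_mul_norm_sub_le_norm_gaveResidual_sub _ _ _ _ _ _ x xs
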